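/- arXiv:math/0304417 — 3 statements merged into one kernel-verified Lean document; each statement's English description precedes it below -/
import Mathlib

section
/- Let δ ∈ (0,1) with d(δ) > 0 and let φ ∈ L¹(𝕋). Then ‖φ‖_{BMO(𝕋)} ≤ (4/d(δ))·max{‖φ‖_{BMO_𝒟(𝕋)}, ‖φ(· − 2πδ)‖_{BMO_𝒟(𝕋)}}; equivalently, for every arc I of 𝕋, (1/|I|)∫_I |φ − φ_I| ≤ (4/d(δ))·max{‖φ‖_{BMO_𝒟(𝕋)}, ‖φ(· − 2πδ)‖_{BMO_𝒟(𝕋)}}. -/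
open Real MeasureTheory Set ENNReal

/-- `d(x) = inf { 2^n |x - k 2^{-n}| : n ∈ ℕ, k ∈ ℤ }`, the relative distance of `x`
to the dyadic rationals. -/
noncomputable def dd (x : ℝ) : ℝ :=
  sInf {y : ℝ | ∃ (n : ℕ) (k : ℤ), y = 2 ^ n * |x - k / 2 ^ n|}

/-- The average `φ_I = (1/|I|) ∫_I φ` over the arc `I = (a, a + ℓ]` (mod 2π);
for a 2π-periodic `φ` this is the average over the corresponding arc of `𝕋`. -/
noncomputable def avgIoc (φ : ℝ → ℝ) (a ℓ : ℝ) : ℝ :=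
  (1 / ℓ) * ∫ x in Set.Ioc a (a + ℓ), φ x

/-- The mean oscillation `(1/|I|) ∫_I |φ - φ_I|` over the arc `I = (a, a + ℓ]`. -/
noncomputable def oscIoc (φ : ℝ → ℝ) (a ℓ : ℝ) : ℝ :=
  (1 / ℓ) * ∫ x in Set.Ioc a (a + ℓ), |φ x - avgIoc φ a ℓ|

/-- `‖φ‖_{BMO(𝕋)}`: the supremum of mean oscillations over all arcs of `𝕋`
(arcs being images mod 2π of intervals `(a, a+ℓ]` with `0 < ℓ ≤ 2π`),
as an extended nonnegative real. -/
noncomputable def bmoNorm (φ : ℝ → ℝ) : ℝ≥0∞ :=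
  ⨆ (a : ℝ) (ℓ : ℝ) (_ : 0 < ℓ) (_ : ℓ ≤ 2 * π), ENNReal.ofReal (oscIoc φ a ℓ)

/-- `‖φ‖_{BMO_𝒟(𝕋)}`: the supremum of mean oscillations over the dyadic intervals
`D_n^k = (2πk·2^{-n}, 2π(k+1)·2^{-n}]`, `n ∈ ℕ`, `0 ≤ k < 2^n`. -/
noncomputable def dyadicBmoNorm (φ : ℝ → ℝ) : ℝ≥0∞ :=
  ⨆ (n : ℕ) (k : ℕ) (_ : k < 2 ^ n),
    ENNReal.ofReal (oscIoc φ (2 * π * k / 2 ^ n) (2 * π / 2 ^ n))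

lemma dd_le (x : ℝ) (n : ℕ) (k : ℤ) : dd x ≤ 2 ^ n * |x - k / 2 ^ n| := by
  apply csInf_le
  · exact ⟨0, by rintro y ⟨n, k, rfl⟩; positivity⟩
  · exact ⟨n, k, rfl⟩

lemma dd_le' (x : ℝ) (n : ℕ) (k : ℤ) : dd x ≤ |2 ^ n * x - k| := by
  have := dd_le x n k
  rwa [show (2:ℝ)^n * |x - k/2^n| = |2^n * x - k| by
    rw [← abs_of_pos (show (0:ℝ) < 2^n by positivity), ← abs_mul]
    congr 1; rw [abs_of_pos (by positivity : (0:ℝ) < 2^n)]; field_simp] at this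

lemma setIntegral_Ioc_add (g : ℝ → ℝ) (a b c : ℝ) :
    ∫ x in Set.Ioc a b, g (x + c) = ∫ x in Set.Ioc (a + c) (b + c), g x := by
  rcases le_or_gt a b with h | h
  · rw [← intervalIntegral.integral_of_le h, ← intervalIntegral.integral_of_le (by linarith),
      intervalIntegral.integral_comp_add_right]
  · rw [Set.Ioc_eq_empty (not_lt.mpr h.le), Set.Ioc_eq_empty (not_lt.mpr (by linarith))]
    simp

/-- A periodic function integrable on one period is interval integrable everywhere. -/
lemma periodic_intervalIntegrable {f : ℝ → ℝ} {T : ℝ} (hT : 0 < T)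
    (hf : Function.Periodic f T) (h : IntegrableOn f (Set.Ioc 0 T)) (a b : ℝ) :
    IntervalIntegrable f volume a b := by
  have h0 : IntervalIntegrable f volume 0 T := by
    rw [intervalIntegrable_iff_integrableOn_Ioc_of_le hT.le]; exact h
  have key : ∀ k : ℤ, IntervalIntegrable f volume (k * T) (k * T + T) := by
    intro k
    have h1 := h0.comp_add_right (-k * T)
    have heq : (fun x => f (x + (-k : ℤ) * T)) = f := funext fun x => (hf.int_mul (-k)) x
    push_cast at heq
    rw [heq] at h1
    have e1 : (0:ℝ) - (-k * T) = k * T := by ring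
    have e2 : T - (-(k:ℝ) * T) = k * T + T := by ring
    rwa [e1, e2] at h1
  have key2 : ∀ (n : ℕ) (k : ℤ), IntervalIntegrable f volume (k * T) (k * T + n * T) := by
    intro n
    induction n with
    | zero => intro k; simp
    | succ n ih =>
      intro k
      have h2 := key (k + n)
      have e1 : ((k + (n:ℤ) : ℤ) : ℝ) * T = k * T + n * T := by push_cast; ring
      rw [e1] at h2
      have h3 := (ih k).trans h2
      have e2 : (k:ℝ) * T + n * T + T = k * T + ((n:ℕ) + 1 : ℕ) * T := by push_cast; ring
      rwa [e2] at h3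
  wlog hab : a ≤ b generalizing a b
  · exact (this b a (le_of_not_ge hab)).symm
  set k : ℤ := ⌊a / T⌋
  have hk : (k : ℝ) * T ≤ a := by
    have := Int.floor_le (a / T)
    calc (k:ℝ) * T ≤ (a / T) * T := by exact mul_le_mul_of_nonneg_right this hT.le
    _ = a := by field_simp
  obtain ⟨n, hn⟩ : ∃ n : ℕ, b ≤ k * T + n * T := by
    obtain ⟨n, hn⟩ := exists_nat_ge ((b - k * T) / T)
    exact ⟨n, by nlinarith [(div_le_iff₀ hT).mp hn]⟩
  exact (key2 n k).mono_set (by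
    rw [Set.uIcc_of_le hab, Set.uIcc_of_le (by nlinarith)]
    exact Set.Icc_subset_Icc hk hn)


lemma oscIoc_nonneg (f : ℝ → ℝ) (a : ℝ) {ℓ : ℝ} (hℓ : 0 < ℓ) : 0 ≤ oscIoc f a ℓ :=
  mul_nonneg (by positivity) (integral_nonneg fun x => abs_nonneg _)

lemma setIntegral_Ioc_period {f : ℝ → ℝ} {T : ℝ} (hf : Function.Periodic f T)
    (a b : ℝ) (m : ℤ) :
    ∫ x in Set.Ioc (a + m * T) (b + m * T), f x = ∫ x in Set.Ioc a b, f x := by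
  rw [← setIntegral_Ioc_add f a b (m * T)]
  refine integral_congr_ae (Filter.Eventually.of_forall fun x => ?_)
  exact (hf.int_mul m) x

lemma avgIoc_add_period {f : ℝ → ℝ} {T : ℝ} (hf : Function.Periodic f T) (a ℓ : ℝ) (m : ℤ) :
    avgIoc f (a + m * T) ℓ = avgIoc f a ℓ := by
  unfold avgIoc
  congr 1
  have e : a + m * T + ℓ = (a + ℓ) + m * T := by ring
  rw [e, setIntegral_Ioc_period hf]

lemma oscIoc_add_period {f : ℝ → ℝ} {T : ℝ} (hf : Function.Periodic f T) (a ℓ : ℝ) (m : ℤ) :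
    oscIoc f (a + m * T) ℓ = oscIoc f a ℓ := by
  unfold oscIoc
  rw [avgIoc_add_period hf]
  congr 1
  have e : a + m * T + ℓ = (a + ℓ) + m * T := by ring
  rw [e]
  exact setIntegral_Ioc_period (fun x => by simp [hf x]) a (a + ℓ) m

lemma avgIoc_comp_sub (f : ℝ → ℝ) (s a ℓ : ℝ) :
    avgIoc (fun x => f (x - s)) a ℓ = avgIoc f (a - s) ℓ := by
  unfold avgIoc
  congr 1
  have h := setIntegral_Ioc_add f a (a + ℓ) (-s)
  simp only [← sub_eq_add_neg] at h
  rw [show a + ℓ - s = a - s + ℓ by ring] at h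
  exact h

lemma oscIoc_comp_sub (f : ℝ → ℝ) (s a ℓ : ℝ) :
    oscIoc (fun x => f (x - s)) a ℓ = oscIoc f (a - s) ℓ := by
  unfold oscIoc
  rw [avgIoc_comp_sub]
  congr 1
  have h := setIntegral_Ioc_add (fun y => |f y - avgIoc f (a - s) ℓ|) a (a + ℓ) (-s)
  simp only [← sub_eq_add_neg] at h
  rw [show a + ℓ - s = a - s + ℓ by ring] at h
  exact h

lemma osc_core {f : ℝ → ℝ} {a ℓ : ℝ} (hℓ : 0 < ℓ)
    (hia : IntegrableOn f (Set.Ioc a (a + ℓ))) (M : ℝ) :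
    oscIoc f a ℓ ≤ (2 / ℓ) * ∫ x in Set.Ioc a (a + ℓ), |f x - M| := by
  set I := Set.Ioc a (a + ℓ) with hI
  set A := avgIoc f a ℓ with hA
  have hvol : volume I = ENNReal.ofReal ℓ := by
    rw [hI, Real.volume_Ioc]; congr 1; ring
  have hfin : volume I < ⊤ := by rw [hvol]; exact ofReal_lt_top
  have hiM : IntegrableOn (fun x => |f x - M|) I := (hia.sub (integrableOn_const hfin.ne)).abs
  have hiA : IntegrableOn (fun x => |f x - A|) I := (hia.sub (integrableOn_const hfin.ne)).abs
  -- A - M = (1/ℓ) ∫ (f - M)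
  have hconst : ∫ _x in I, M = ℓ * M := by
    rw [setIntegral_const, measureReal_def, hvol, smul_eq_mul, toReal_ofReal hℓ.le]
  have hsub : ∫ x in I, (f x - M) = (∫ x in I, f x) - ℓ * M := by
    rw [integral_sub hia (integrableOn_const hfin.ne), hconst]
  have hAM : |A - M| * ℓ ≤ ∫ x in I, |f x - M| := by
    have h1 : A - M = (1 / ℓ) * ∫ x in I, (f x - M) := by
      rw [hsub, hA]; unfold avgIoc; field_simp; rfl
    have h2 : |∫ x in I, (f x - M)| ≤ ∫ x in I, |f x - M| := by
      simpa [Real.norm_eq_abs] using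
        norm_integral_le_integral_norm (μ := volume.restrict I) (f := fun x => f x - M)
    rw [h1]
    rw [abs_mul, abs_of_pos (by positivity : (0:ℝ) < 1/ℓ)]
    rw [mul_comm, ← mul_assoc]
    calc ℓ * (1/ℓ) * |∫ x in I, (f x - M)| = |∫ x in I, (f x - M)| := by field_simp
    _ ≤ _ := h2
  have key : ∫ x in I, |f x - A| ≤ 2 * ∫ x in I, |f x - M| := by
    have step1 : ∫ x in I, |f x - A| ≤ ∫ x in I, (|f x - M| + |A - M|) := by
      refine setIntegral_mono_on hiA (hiM.add (integrableOn_const hfin.ne))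
        measurableSet_Ioc fun x _ => ?_
      calc |f x - A| = |(f x - M) + (M - A)| := by congr 1; ring
      _ ≤ |f x - M| + |M - A| := abs_add_le _ _
      _ = |f x - M| + |A - M| := by rw [abs_sub_comm M A]
    have step2 : ∫ x in I, (|f x - M| + |A - M|) = (∫ x in I, |f x - M|) + |A - M| * ℓ := by
      rw [integral_add hiM (integrableOn_const hfin.ne), setIntegral_const, measureReal_def, hvol,
        smul_eq_mul, toReal_ofReal hℓ.le, mul_comm]
    linarith
  unfold oscIoc
  rw [← hI, ← hA]
  calc (1/ℓ) * ∫ x in I, |f x - A| ≤ (1/ℓ) * (2 * ∫ x in I, |f x - M|) := by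
        exact mul_le_mul_of_nonneg_left key (by positivity)
  _ = (2/ℓ) * ∫ x in I, |f x - M| := by ring

lemma oscIoc_le_subset {f : ℝ → ℝ} {a ℓ c L : ℝ} (hℓ : 0 < ℓ) (hL : 0 < L)
    (hsub : Set.Ioc a (a + ℓ) ⊆ Set.Ioc c (c + L))
    (hi : IntegrableOn f (Set.Ioc c (c + L))) :
    oscIoc f a ℓ ≤ 2 * (L / ℓ) * oscIoc f c L := by
  have hfin : volume (Set.Ioc c (c + L)) < ⊤ := by rw [Real.volume_Ioc]; exact ofReal_lt_top
  have hiM : IntegrableOn (fun x => |f x - avgIoc f c L|) (Set.Ioc c (c + L)) :=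
    (hi.sub (integrableOn_const hfin.ne)).abs
  have h1 := osc_core hℓ (hi.mono_set hsub) (avgIoc f c L)
  have h2 : ∫ x in Set.Ioc a (a + ℓ), |f x - avgIoc f c L| ≤
      ∫ x in Set.Ioc c (c + L), |f x - avgIoc f c L| :=
    setIntegral_mono_set hiM (Filter.Eventually.of_forall fun x => abs_nonneg _)
      (HasSubset.Subset.eventuallyLE hsub)
  calc oscIoc f a ℓ ≤ (2/ℓ) * ∫ x in Set.Ioc a (a + ℓ), |f x - avgIoc f c L| := h1
  _ ≤ (2/ℓ) * ∫ x in Set.Ioc c (c + L), |f x - avgIoc f c L| := by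
      exact mul_le_mul_of_nonneg_left h2 (by positivity)
  _ = 2 * (L / ℓ) * oscIoc f c L := by
      unfold oscIoc; field_simp

lemma oscIoc_le_circle {f : ℝ → ℝ} {T : ℝ} (hT : 0 < T) (hf : Function.Periodic f T)
    {a ℓ : ℝ} (hℓ : 0 < ℓ) (hℓ2 : ℓ ≤ T)
    (hi : ∀ u v : ℝ, IntervalIntegrable f volume u v) :
    oscIoc f a ℓ ≤ 2 * (T / ℓ) * oscIoc f 0 T := by
  set M := avgIoc f 0 T with hM
  have hiab : IntegrableOn f (Set.Ioc a (a + ℓ)) := by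
    have := hi a (a + ℓ)
    rwa [intervalIntegrable_iff_integrableOn_Ioc_of_le (by linarith)] at this
  have h1 := osc_core hℓ hiab M
  have hfinT : volume (Set.Ioc a (a + T)) < ⊤ := by rw [Real.volume_Ioc]; exact ofReal_lt_top
  have hiT : IntegrableOn f (Set.Ioc a (a + T)) := by
    have := hi a (a + T)
    rwa [intervalIntegrable_iff_integrableOn_Ioc_of_le (by linarith)] at this
  have hiMT : IntegrableOn (fun x => |f x - M|) (Set.Ioc a (a + T)) :=
    (hiT.sub (integrableOn_const hfinT.ne)).abs
  have h2 : ∫ x in Set.Ioc a (a + ℓ), |f x - M| ≤ ∫ x in Set.Ioc a (a + T), |f x - M| :=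
    setIntegral_mono_set hiMT (Filter.Eventually.of_forall fun x => abs_nonneg _)
      (HasSubset.Subset.eventuallyLE (Set.Ioc_subset_Ioc le_rfl (by linarith)))
  have h3 : ∫ x in Set.Ioc a (a + T), |f x - M| = ∫ x in Set.Ioc 0 (0 + T), |f x - M| := by
    have hg : Function.Periodic (fun x => |f x - M|) T := fun x => by simp [hf x]
    rw [← intervalIntegral.integral_of_le (by linarith), ← intervalIntegral.integral_of_le
      (by linarith : (0:ℝ) ≤ 0 + T)]
    exact hg.intervalIntegral_add_eq a 0
  calc oscIoc f a ℓ ≤ (2/ℓ) * ∫ x in Set.Ioc a (a + ℓ), |f x - M| := h1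
  _ ≤ (2/ℓ) * ∫ x in Set.Ioc 0 (0 + T), |f x - M| := by
      rw [← h3]; exact mul_le_mul_of_nonneg_left h2 (by positivity)
  _ = 2 * (T / ℓ) * oscIoc f 0 T := by
      unfold oscIoc; rw [hM]; field_simp

lemma exists_level {d ℓ T : ℝ} (hd : 0 < d) (hT : 0 < T) (hℓ : 0 < ℓ) (h : ℓ ≤ T * d) :
    ∃ n : ℕ, ℓ ≤ (T / 2 ^ n) * d ∧ T / 2 ^ n < 2 * ℓ / d := by
  set x : ℕ := ⌊T * d / ℓ⌋₊ with hx
  have hr1 : (1:ℝ) ≤ T * d / ℓ := (one_le_div hℓ).mpr h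
  have hx1 : 1 ≤ x := Nat.le_floor (by exact_mod_cast hr1)
  set n := Nat.log 2 x with hn
  have h1 : (2:ℝ) ^ n ≤ T * d / ℓ := by
    calc ((2:ℝ) ^ n) = ((2 ^ n : ℕ) : ℝ) := by push_cast; ring
    _ ≤ (x : ℝ) := by exact_mod_cast Nat.pow_log_le_self 2 (by omega)
    _ ≤ T * d / ℓ := Nat.floor_le (by linarith)
  have h2 : T * d / ℓ < (2:ℝ) ^ (n + 1) := by
    have hlt : x < 2 ^ (n + 1) := Nat.lt_pow_succ_log_self (by norm_num) x
    calc T * d / ℓ < (x : ℝ) + 1 := Nat.lt_floor_add_one _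
    _ ≤ (2:ℝ) ^ (n + 1) := by exact_mod_cast Nat.succ_le_of_lt hlt
  have hp : (0:ℝ) < 2 ^ n := by positivity
  refine ⟨n, ?_, ?_⟩
  · rw [div_mul_eq_mul_div, le_div_iff₀ hp]
    have := (le_div_iff₀ hℓ).mp h1
    linarith
  · rw [div_lt_div_iff₀ hp hd]
    have := (div_lt_iff₀ hℓ).mp h2
    have e : (2:ℝ) ^ (n + 1) = 2 * 2 ^ n := by ring
    nlinarith

/-- **Theorem 2.2.** For `δ ∈ (0,1)` with `d(δ) > 0` and `φ ∈ L¹(𝕋)`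
(a 2π-periodic function, integrable over a period),
`‖φ‖_{BMO(𝕋)} ≤ (4/d(δ)) · max {‖φ‖_{BMO_𝒟(𝕋)}, ‖φ(· - 2πδ)‖_{BMO_𝒟(𝕋)}}`. -/
theorem bmo_le_max_dyadic (δ : ℝ) (hδ : δ ∈ Set.Ioo (0 : ℝ) 1) (hd : 0 < dd δ)
    (φ : ℝ → ℝ) (hper : Function.Periodic φ (2 * π))
    (hint : IntegrableOn φ (Set.Ioc 0 (2 * π))) :
    bmoNorm φ ≤ ENNReal.ofReal (4 / dd δ) *
      max (dyadicBmoNorm φ) (dyadicBmoNorm fun x => φ (x - 2 * π * δ)) := by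
  obtain ⟨hδ0, hδ1⟩ := hδ
  have hπ : (0:ℝ) < π := Real.pi_pos
  have hT : (0:ℝ) < 2 * π := by linarith
  set d := dd δ with hdd
  set ψ : ℝ → ℝ := fun x => φ (x - 2 * π * δ) with hψ
  have hψper : Function.Periodic ψ (2 * π) := fun x => by
    simp only [hψ]
    rw [show x + 2 * π - 2 * π * δ = (x - 2 * π * δ) + 2 * π by ring, hper]
  have hφint : ∀ u v : ℝ, IntervalIntegrable φ volume u v :=
    periodic_intervalIntegrable hT hper hint
  have hφIoc : ∀ u v : ℝ, IntegrableOn φ (Set.Ioc u v) := by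
    intro u v
    rcases le_or_gt u v with h | h
    · exact (intervalIntegrable_iff_integrableOn_Ioc_of_le h).mp (hφint u v)
    · rw [Set.Ioc_eq_empty (not_lt.mpr h.le)]; exact integrableOn_empty
  set Mx := max (dyadicBmoNorm φ) (dyadicBmoNorm ψ) with hMx
  unfold bmoNorm
  refine iSup_le fun a => iSup_le fun ℓ => iSup_le fun hℓ => iSup_le fun hℓ2 => ?_
  suffices h : ∃ (f : ℝ → ℝ) (n k : ℕ), k < 2 ^ n ∧ (dyadicBmoNorm f ≤ Mx) ∧
      oscIoc φ a ℓ ≤ (4 / d) * oscIoc f (2 * π * k / 2 ^ n) (2 * π / 2 ^ n) by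
    obtain ⟨f, n, k, hk, hfM, hineq⟩ := h
    calc ENNReal.ofReal (oscIoc φ a ℓ)
        ≤ ENNReal.ofReal ((4 / d) * oscIoc f (2 * π * k / 2 ^ n) (2 * π / 2 ^ n)) :=
          ofReal_le_ofReal hineq
    _ = ENNReal.ofReal (4 / d) * ENNReal.ofReal (oscIoc f (2 * π * k / 2 ^ n) (2 * π / 2 ^ n)) :=
          ofReal_mul (by positivity)
    _ ≤ ENNReal.ofReal (4 / d) * Mx := by
          refine mul_le_mul_right (le_trans ?_ hfM) _
          unfold dyadicBmoNorm
          exact le_iSup_of_le n (le_iSup_of_le k (le_iSup_of_le hk le_rfl))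
  rcases le_or_gt ℓ (2 * π * d) with hcase | hcase
  · -- small arc: fits in a dyadic interval of one of the two grids
    obtain ⟨n, hn1, hn2⟩ := exists_level hd hT hℓ (by linarith : ℓ ≤ (2 * π) * d)
    set L : ℝ := 2 * π / 2 ^ n with hL'
    have hp2 : (0:ℝ) < 2 ^ n := by positivity
    have hLpos : 0 < L := by positivity
    have hL2 : 2 * (L / ℓ) ≤ 4 / d := by
      have h1 : L * d < 2 * ℓ := by
        have := (lt_div_iff₀ hd).mp hn2
        linarith
      rw [show 2 * (L / ℓ) = (2 * L) / ℓ by ring, div_le_div_iff₀ hℓ hd]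
      nlinarith
    set j : ℤ := ⌊a / L⌋ with hj
    set j' : ℤ := ⌊(a + 2 * π * δ) / L⌋ with hj'
    set c0 : ℝ := L * j with hc0
    set c1 : ℝ := L * j' - 2 * π * δ with hc1
    have hc0a : c0 ≤ a := by
      calc c0 = L * (j:ℝ) := rfl
      _ ≤ L * (a / L) := mul_le_mul_of_nonneg_left (Int.floor_le _) hLpos.le
      _ = a := by field_simp
    have hc0b : a < c0 + L := by
      calc a = L * (a / L) := by field_simp
      _ < L * ((j:ℝ) + 1) := mul_lt_mul_of_pos_left (Int.lt_floor_add_one _) hLpos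
      _ = c0 + L := by rw [hc0]; ring
    have hc1a : c1 ≤ a := by
      have : L * (j':ℝ) ≤ a + 2 * π * δ := by
        calc L * (j':ℝ) ≤ L * ((a + 2 * π * δ) / L) :=
          mul_le_mul_of_nonneg_left (Int.floor_le _) hLpos.le
        _ = a + 2 * π * δ := by field_simp
      rw [hc1]; linarith
    have hc1b : a < c1 + L := by
      have : a + 2 * π * δ < L * ((j':ℝ) + 1) := by
        calc a + 2 * π * δ = L * ((a + 2 * π * δ) / L) := by field_simp
        _ < L * ((j':ℝ) + 1) := mul_lt_mul_of_pos_left (Int.lt_floor_add_one _) hLpos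
      rw [hc1]; nlinarith
    by_cases hA : a + ℓ ≤ c0 + L
    · -- standard grid
      have hsub : Set.Ioc a (a + ℓ) ⊆ Set.Ioc c0 (c0 + L) := Set.Ioc_subset_Ioc hc0a hA
      have hosc := oscIoc_le_subset hℓ hLpos hsub (hφIoc _ _)
      set k : ℕ := (j % ((2 ^ n : ℕ) : ℤ)).toNat with hkdef
      have hmod1 : 0 ≤ j % ((2 ^ n : ℕ) : ℤ) := Int.emod_nonneg j (by positivity)
      have hmod2 : j % ((2 ^ n : ℕ) : ℤ) < ((2 ^ n : ℕ) : ℤ) :=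
        Int.emod_lt_of_pos j (by positivity)
      have hk : k < 2 ^ n := by omega
      have hkj : (k : ℤ) = j % ((2 ^ n : ℕ) : ℤ) := by omega
      set m : ℤ := j / ((2 ^ n : ℕ) : ℤ) with hm
      have hz : ((2 ^ n : ℕ) : ℤ) * m + (k : ℤ) = j := by
        rw [hkj, hm]; exact Int.mul_ediv_add_emod j _
      have hr : (2:ℝ) ^ n * (m:ℝ) + (k:ℝ) = (j:ℝ) := by exact_mod_cast congrArg Int.cast hz
      have hdecomp : c0 = 2 * π * (k:ℝ) / 2 ^ n + (m:ℝ) * (2 * π) := by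
        rw [hc0, ← hr, hL']; field_simp; ring
      refine ⟨φ, n, k, hk, le_max_left _ _, ?_⟩
      calc oscIoc φ a ℓ ≤ 2 * (L / ℓ) * oscIoc φ c0 L := hosc
      _ = 2 * (L / ℓ) * oscIoc φ (2 * π * (k:ℝ) / 2 ^ n) L := by
          rw [hdecomp, oscIoc_add_period hper]
      _ ≤ (4 / d) * oscIoc φ (2 * π * (k:ℝ) / 2 ^ n) L :=
          mul_le_mul_of_nonneg_right hL2 (oscIoc_nonneg _ _ hLpos)
    · by_cases hB : a + ℓ ≤ c1 + L
      · -- shifted grid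
        have hsub : Set.Ioc a (a + ℓ) ⊆ Set.Ioc c1 (c1 + L) := Set.Ioc_subset_Ioc hc1a hB
        have hosc := oscIoc_le_subset hℓ hLpos hsub (hφIoc _ _)
        set k : ℕ := (j' % ((2 ^ n : ℕ) : ℤ)).toNat with hkdef
        have hmod1 : 0 ≤ j' % ((2 ^ n : ℕ) : ℤ) := Int.emod_nonneg j' (by positivity)
        have hmod2 : j' % ((2 ^ n : ℕ) : ℤ) < ((2 ^ n : ℕ) : ℤ) :=
          Int.emod_lt_of_pos j' (by positivity)
        have hk : k < 2 ^ n := by omega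
        have hkj : (k : ℤ) = j' % ((2 ^ n : ℕ) : ℤ) := by omega
        set m : ℤ := j' / ((2 ^ n : ℕ) : ℤ) with hm
        have hz : ((2 ^ n : ℕ) : ℤ) * m + (k : ℤ) = j' := by
          rw [hkj, hm]; exact Int.mul_ediv_add_emod j' _
        have hr : (2:ℝ) ^ n * (m:ℝ) + (k:ℝ) = (j':ℝ) := by exact_mod_cast congrArg Int.cast hz
        have hdecomp : L * (j':ℝ) = 2 * π * (k:ℝ) / 2 ^ n + (m:ℝ) * (2 * π) := by
          rw [← hr, hL']; field_simp; ring
        have e1 : oscIoc ψ (L * (j':ℝ)) L = oscIoc φ c1 L := by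
          have := oscIoc_comp_sub φ (2 * π * δ) (L * (j':ℝ)) L
          rw [hc1]
          exact this
        have e2 : oscIoc ψ (L * (j':ℝ)) L = oscIoc ψ (2 * π * (k:ℝ) / 2 ^ n) L := by
          rw [hdecomp, oscIoc_add_period hψper]
        refine ⟨ψ, n, k, hk, le_max_right _ _, ?_⟩
        calc oscIoc φ a ℓ ≤ 2 * (L / ℓ) * oscIoc φ c1 L := hosc
        _ = 2 * (L / ℓ) * oscIoc ψ (2 * π * (k:ℝ) / 2 ^ n) L := by rw [← e1, e2]
        _ ≤ (4 / d) * oscIoc ψ (2 * π * (k:ℝ) / 2 ^ n) L :=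
            mul_le_mul_of_nonneg_right hL2 (oscIoc_nonneg _ _ hLpos)
      · -- impossible: both grid boundaries inside the arc
        exfalso
        push_neg at hA hB
        have hsep : L * d ≤ |c0 - c1| := by
          have he : c0 - c1 = L * ((j:ℝ) - (j':ℝ) + 2 ^ n * δ) := by
            rw [hc0, hc1, hL']; field_simp; ring
          rw [he, abs_mul, abs_of_pos hLpos]
          refine mul_le_mul_of_nonneg_left ?_ hLpos.le
          calc d ≤ |2 ^ n * δ - ((j' - j : ℤ) : ℝ)| := dd_le' δ n (j' - j)
          _ = |(j:ℝ) - (j':ℝ) + 2 ^ n * δ| := by push_cast; congr 1; ring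
        have habs : |c0 - c1| < ℓ := by
          rw [abs_lt]
          constructor <;> nlinarith
        have : ℓ ≤ L * d := by
          calc ℓ ≤ (2 * π / 2 ^ n) * d := hn1
          _ = L * d := by rw [hL']
        linarith
  · -- large arc: compare with the whole circle D_0^0
    refine ⟨φ, 0, 0, by norm_num, le_max_left _ _, ?_⟩
    have h1 := oscIoc_le_circle hT hper (a := a) hℓ hℓ2 hφint
    have hosc0 : 0 ≤ oscIoc φ 0 (2 * π) := oscIoc_nonneg _ _ hT
    have hb : 2 * ((2 * π) / ℓ) ≤ 4 / d := by
      rw [show 2 * ((2 * π) / ℓ) = (2 * (2 * π)) / ℓ by ring, div_le_div_iff₀ hℓ hd]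
      nlinarith
    have hmain : oscIoc φ a ℓ ≤ (4 / d) * oscIoc φ 0 (2 * π) :=
      le_trans h1 (mul_le_mul_of_nonneg_right hb hosc0)
    have e0 : 2 * π * ((0:ℕ):ℝ) / 2 ^ (0:ℕ) = 0 := by norm_num
    have e1 : 2 * π / 2 ^ (0:ℕ) = 2 * π := by norm_num
    rw [e0, e1]
    exact hmain
end

section
/- Let δ, δ′ ∈ [0,1) with d(δ − δ′) > 0. Then for every arc I of 𝕋, at least one of the two shifted dyadic families 𝒟^δ, 𝒟^{δ′} fits I with fit-constant 2/d(δ − δ′): there exist n ∈ ℕ and 0 ≤ k < 2^n such that either I ⊆ D_n^{δ,k} with |D_n^{δ,k}| ≤ (2/d(δ−δ′))·|I|, or I ⊆ D_n^{δ′,k} with |D_n^{δ′,k}| ≤ (2/d(δ−δ′))·|I|. -/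
open Real MeasureTheory Set ENNReal

/-- The arc of the circle `𝕋 = ℝ / 2πℤ` obtained as the image (mod 2π) of the
half-open interval `(a, a + ℓ]`. -/
noncomputable def arcSet (a ℓ : ℝ) : Set (AddCircle (2 * π)) :=
  (fun x : ℝ => (x : AddCircle (2 * π))) '' Set.Ioc a (a + ℓ)

lemma coe_eq_coe_AddCircle (p x y : ℝ) (t : ℤ) (h : x - y = t * p) :
    (x : AddCircle p) = (y : AddCircle p) := by
  have : x - y ∈ AddSubgroup.zmultiples p := ⟨t, by simp [h, zsmul_eq_mul]⟩
  exact (QuotientAddGroup.eq_iff_sub_mem.2 this)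

lemma arc_univ (b : ℝ) : arcSet b (2 * π) = univ := by
  apply eq_univ_of_forall
  intro y
  obtain ⟨x, rfl⟩ := QuotientAddGroup.mk_surjective y
  refine ⟨toIocMod two_pi_pos b x, toIocMod_mem_Ioc two_pi_pos b x, ?_⟩
  refine coe_eq_coe_AddCircle _ _ _ (-(toIocDiv two_pi_pos b x)) ?_
  have h := toIocMod_sub_self two_pi_pos b x
  rw [zsmul_eq_mul] at h
  push_cast at h ⊢
  linarith

lemma arc_shift_subset (b ℓ : ℝ) (t : ℤ) : arcSet (b + t * (2 * π)) ℓ ⊆ arcSet b ℓ := by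
  rintro y ⟨x, hx, rfl⟩
  refine ⟨x - t * (2 * π), ?_, coe_eq_coe_AddCircle _ _ _ (-t) (by push_cast; ring)⟩
  obtain ⟨h1, h2⟩ := hx
  exact ⟨by linarith, by linarith⟩

lemma arc_shift (b ℓ : ℝ) (t : ℤ) : arcSet (b + t * (2 * π)) ℓ = arcSet b ℓ := by
  refine subset_antisymm (arc_shift_subset b ℓ t) ?_
  have := arc_shift_subset (b + t * (2 * π)) ℓ (-t)
  simpa using this

lemma dd_le_half (x : ℝ) : dd x ≤ 1 / 2 := by
  have h := dd_le x 0 (round x)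
  simp only [pow_zero, one_mul] at h
  have := abs_sub_round x
  calc dd x ≤ |x - round x| := by simpa using h
    _ ≤ 1 / 2 := this

lemma arc_mono {a ℓ c s : ℝ} (h : Set.Ioc a (a + ℓ) ⊆ Set.Ioc c (c + s)) :
    arcSet a ℓ ⊆ arcSet c s := Set.image_mono h

lemma fit_of_avoid (n : ℕ) (g₀ a ℓ : ℝ)
    (hav : ∀ m : ℤ, g₀ + m * (2 * π / 2 ^ n) ∉ Set.Ioc a (a + ℓ)) :
    ∃ k : ℕ, k < 2 ^ n ∧ arcSet a ℓ ⊆ arcSet (g₀ + k * (2 * π / 2 ^ n)) (2 * π / 2 ^ n) := by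
  set s : ℝ := 2 * π / 2 ^ n with hs
  have hspos : 0 < s := by positivity
  set m : ℤ := ⌊(a - g₀) / s⌋ with hm
  have hga : g₀ + m * s ≤ a := by
    have := Int.floor_le ((a - g₀) / s)
    have := (le_div_iff₀ hspos).1 this
    linarith
  have hag : a < g₀ + m * s + s := by
    have := Int.lt_floor_add_one ((a - g₀) / s)
    have := (div_lt_iff₀ hspos).1 this
    push_cast at this
    nlinarith
  have hend : a + ℓ ≤ g₀ + m * s + s := by
    by_contra hcon
    push_neg at hcon
    refine hav (m + 1) ⟨?_, ?_⟩ <;> push_cast <;> nlinarith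
  have hsub : Set.Ioc a (a + ℓ) ⊆ Set.Ioc (g₀ + m * s) (g₀ + m * s + s) := by
    intro x hx
    exact ⟨lt_of_le_of_lt hga hx.1, le_trans hx.2 hend⟩
  set k : ℕ := (m % (2 ^ n : ℤ)).toNat with hk
  have h2n : (0:ℤ) < 2 ^ n := by positivity
  have hkm : (k : ℤ) = m % (2 ^ n : ℤ) := Int.toNat_of_nonneg (Int.emod_nonneg m (by positivity))
  have hklt : k < 2 ^ n := by
    have h1 : (k : ℤ) < (2:ℤ) ^ n := hkm ▸ Int.emod_lt_of_pos m h2n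
    exact_mod_cast h1
  refine ⟨k, hklt, ?_⟩
  set t : ℤ := m / (2 ^ n : ℤ) with ht
  have hmt : m = (2 ^ n : ℤ) * t + k := by rw [hkm]; exact (Int.mul_ediv_add_emod m _).symm
  have hgeq : g₀ + m * s = (g₀ + k * s) + t * (2 * π) := by
    have h2 : (2:ℝ) ^ n ≠ 0 := by positivity
    have : (m : ℝ) = 2 ^ n * t + k := by exact_mod_cast congrArg (Int.cast : ℤ → ℝ) hmt
    rw [this, hs]
    field_simp
    ring
  calc arcSet a ℓ ⊆ arcSet (g₀ + m * s) s := arc_mono hsub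
    _ = arcSet ((g₀ + k * s) + t * (2 * π)) s := by rw [hgeq]
    _ = arcSet (g₀ + k * s) s := arc_shift _ _ t

/-- For `δ, δ' ∈ [0,1)` with `d(δ - δ') > 0` and every arc `I` of `𝕋`, one of the two
shifted dyadic families `𝒟^δ`, `𝒟^{δ'}` fits `I` with fit-constant `2/d(δ - δ')`:
there are `n ∈ ℕ`, `0 ≤ k < 2^n` with `I ⊆ D_n^{δ,k}` and
`|D_n^{δ,k}| ≤ (2/d(δ-δ'))·|I|`, or the same with `δ'` in place of `δ`. -/
theorem shifted_dyadic_fits_pair (δ δ' : ℝ) (hδ : δ ∈ Set.Ico (0 : ℝ) 1)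
    (hδ' : δ' ∈ Set.Ico (0 : ℝ) 1) (hd : 0 < dd (δ - δ'))
    (a ℓ : ℝ) (hℓ : 0 < ℓ) (hℓ' : ℓ ≤ 2 * π) :
    ∃ n k : ℕ, k < 2 ^ n ∧
      ((arcSet a ℓ ⊆ arcSet (2 * π * δ + 2 * π * k / 2 ^ n) (2 * π / 2 ^ n) ∧
          2 * π / 2 ^ n ≤ (2 / dd (δ - δ')) * ℓ) ∨
       (arcSet a ℓ ⊆ arcSet (2 * π * δ' + 2 * π * k / 2 ^ n) (2 * π / 2 ^ n) ∧
          2 * π / 2 ^ n ≤ (2 / dd (δ - δ')) * ℓ)) := by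
  set d : ℝ := dd (δ - δ') with hdd
  have hdhalf : d ≤ 1 / 2 := dd_le_half _
  have hP : ∃ n : ℕ, π * d ≤ 2 ^ n * ℓ := by
    obtain ⟨n, hn⟩ := pow_unbounded_of_one_lt (π * d / ℓ) (by norm_num : (1:ℝ) < 2)
    exact ⟨n, by rw [div_lt_iff₀ hℓ] at hn; nlinarith⟩
  classical
  set n : ℕ := Nat.find hP with hn
  have hnP : π * d ≤ 2 ^ n * ℓ := Nat.find_spec hP
  have hfit : 2 * π / 2 ^ n ≤ (2 / d) * ℓ := by
    have h2n : (0:ℝ) < 2 ^ n := by positivity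
    rw [div_mul_eq_mul_div, div_le_div_iff₀ h2n hd]
    nlinarith
  rcases Nat.eq_zero_or_pos n with hn0 | hn1
  · refine ⟨0, 0, by norm_num, Or.inl ⟨?_, by rw [hn0] at hfit; simpa using hfit⟩⟩
    have : arcSet (2 * π * δ + 2 * π * (0:ℕ) / 2 ^ (0:ℕ)) (2 * π / 2 ^ (0:ℕ))
        = arcSet (2 * π * δ) (2 * π) := by norm_num
    rw [this, arc_univ]
    exact subset_univ _
  · -- n ≥ 1 : minimality gives 2^n * ℓ < 2 π d
    have hmin : ¬ (π * d ≤ 2 ^ (n - 1) * ℓ) := Nat.find_min hP (by omega)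
    push_neg at hmin
    have hlt : 2 ^ n * ℓ < 2 * π * d := by
      have : (2:ℝ) ^ n = 2 * 2 ^ (n - 1) := by
        rw [← pow_succ']
        congr 1
        omega
      rw [this]
      nlinarith
    set s : ℝ := 2 * π / 2 ^ n with hs
    have h2n : (0:ℝ) < 2 ^ n := by positivity
    have hℓs : ℓ < 2 * π * d / 2 ^ n := by
      rw [lt_div_iff₀ h2n]; nlinarith
    -- separation between the two grids
    have hsep : ∀ (mx my : ℤ), ℓ < |(2 * π * δ + mx * s) - (2 * π * δ' + my * s)| := by
      intro mx my
      have hdle := dd_le (δ - δ') n (my - mx)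
      rw [← hdd] at hdle
      push_cast at hdle
      rw [show δ - δ' - ((my:ℝ) - mx) / 2 ^ n = (δ - δ') + ((mx:ℝ) - my) / 2 ^ n by ring] at hdle
      have hdiff : (2 * π * δ + mx * s) - (2 * π * δ' + my * s)
          = 2 * π * ((δ - δ') + ((mx:ℝ) - my) / 2 ^ n) := by
        rw [hs]; field_simp; ring
      rw [hdiff, abs_mul, abs_of_pos (by positivity : (0:ℝ) < 2 * π)]
      have hge : d / 2 ^ n ≤ |(δ - δ') + ((mx:ℝ) - my) / 2 ^ n| := by
        rw [mul_comm] at hdle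
        exact (div_le_iff₀ h2n).2 hdle
      calc ℓ < 2 * π * d / 2 ^ n := hℓs
        _ = 2 * π * (d / 2 ^ n) := by ring
        _ ≤ 2 * π * |(δ - δ') + ((mx:ℝ) - my) / 2 ^ n| := by nlinarith [pi_pos, hge]
  -- now case on whether the δ grid meets the interval
    by_cases hA : ∃ m : ℤ, 2 * π * δ + m * s ∈ Set.Ioc a (a + ℓ)
    · -- δ grid meets, so δ' grid avoids
      obtain ⟨mx, hmx⟩ := hA
      have hav : ∀ m : ℤ, 2 * π * δ' + m * s ∉ Set.Ioc a (a + ℓ) := by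
        intro my hmy
        have h1 := hsep mx my
        have h2 : |(2 * π * δ + mx * s) - (2 * π * δ' + my * s)| ≤ ℓ := by
          rw [abs_le]
          obtain ⟨p1, p2⟩ := hmx
          obtain ⟨q1, q2⟩ := hmy
          constructor <;> linarith
        linarith
      obtain ⟨k, hk, hsub⟩ := fit_of_avoid n (2 * π * δ') a ℓ hav
      refine ⟨n, k, hk, Or.inr ⟨?_, hfit⟩⟩
      have heq : 2 * π * δ' + 2 * π * (k:ℝ) / 2 ^ n = 2 * π * δ' + (k:ℝ) * (2 * π / 2 ^ n) := by
        ring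
      rw [heq]
      exact hsub
    · push_neg at hA
      obtain ⟨k, hk, hsub⟩ := fit_of_avoid n (2 * π * δ) a ℓ hA
      refine ⟨n, k, hk, Or.inl ⟨?_, hfit⟩⟩
      have heq : 2 * π * δ + 2 * π * (k:ℝ) / 2 ^ n = 2 * π * δ + (k:ℝ) * (2 * π / 2 ^ n) := by
        ring
      rw [heq]
      exact hsub
end

section
/- Let m ≥ 1 and let δ₀, δ₁, …, δ_m ∈ (0,1) satisfy d({δ_i}) := min_{i ≠ j} d(δ_i − δ_j) > 0, and set c = 2/d({δ_i}). Then for every cube J = J₁ × ⋯ × J_m ⊆ 𝕋^m (a product of m arcs of equal length), there exists an index i ∈ {0,…,m} and there exist n ∈ ℕ and k₁, …, k_m with 0 ≤ k_j < 2^n such that J ⊆ D_n^{δ_i,k₁} × ⋯ × D_n^{δ_i,k_m} and |D_n^{δ_i,k₁} × ⋯ × D_n^{δ_i,k_m}| ≤ c^m · |J| (volumes); i.e., the dyadic filtration ℱ^i = (𝒟^{δ_i})^m on 𝕋^m fits J with fit-constant c^m. -/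
open Real MeasureTheory Set ENNReal

/-- `d({δᵢ}) = min_{i ≠ j} d(δᵢ - δⱼ)` for a finite family `δ : Fin (m+1) → ℝ`. -/
noncomputable def dfam {m : ℕ} (δ : Fin (m + 1) → ℝ) : ℝ :=
  sInf {x : ℝ | ∃ i j : Fin (m + 1), i ≠ j ∧ x = dd (δ i - δ j)}

lemma dfam_le {m : ℕ} (δ : Fin (m + 1) → ℝ) {i j : Fin (m + 1)} (h : i ≠ j) :
    dfam δ ≤ dd (δ i - δ j) := by
  apply csInf_le
  · refine ⟨0, ?_⟩
    rintro y ⟨i, j, hij, rfl⟩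
    apply Real.sInf_nonneg
    rintro y ⟨n, k, rfl⟩
    positivity
  · exact ⟨i, j, h, rfl⟩

lemma grid_sep {m : ℕ} (δ : Fin (m + 1) → ℝ) {i i' : Fin (m + 1)} (h : i ≠ i')
    (n : ℕ) (K K' : ℤ) :
    2 * π * dfam δ / 2 ^ n ≤
      |(2 * π * δ i + 2 * π * K / 2 ^ n) - (2 * π * δ i' + 2 * π * K' / 2 ^ n)| := by
  have hπ : (0:ℝ) < 2 * π := by positivity
  have h2 : (0:ℝ) < 2 ^ n := by positivity
  have h1 : (2 * π * δ i + 2 * π * K / 2 ^ n) - (2 * π * δ i' + 2 * π * K' / 2 ^ n)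
      = 2 * π * ((δ i - δ i') - (K' - K) / 2 ^ n) := by
    push_cast
    field_simp
    ring
  rw [h1, abs_mul, abs_of_pos hπ]
  have h3 := (dfam_le δ h).trans (dd_le (δ i - δ i') n (K' - K))
  push_cast at h3
  rw [div_le_iff₀ h2]
  calc 2 * π * dfam δ ≤ 2 * π * (2 ^ n * |(δ i - δ i') - (K' - K) / 2 ^ n|) := by
        apply mul_le_mul_of_nonneg_left h3 (le_of_lt hπ)
    _ = 2 * π * |δ i - δ i' - (K' - K) / 2 ^ n| * 2 ^ n := by ring

lemma arcSet_mono {a b ℓ L : ℝ} (h1 : b ≤ a) (h2 : a + ℓ ≤ b + L) :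
    arcSet a ℓ ⊆ arcSet b L :=
  Set.image_mono (Set.Ioc_subset_Ioc h1 h2)

lemma arcSet_add_int_mul (a ℓ : ℝ) (t : ℤ) : arcSet (a + 2 * π * t) ℓ = arcSet a ℓ := by
  have key : ((2 * π * (t:ℝ) : ℝ) : AddCircle (2 * π)) = 0 := by
    rw [AddCircle.coe_eq_zero_iff]
    exact ⟨t, by rw [zsmul_eq_mul]; push_cast; ring⟩
  unfold arcSet
  ext z
  simp only [Set.mem_image, Set.mem_Ioc]
  constructor
  · rintro ⟨x, ⟨hx1, hx2⟩, rfl⟩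
    refine ⟨x - 2 * π * t, ⟨by linarith, by linarith⟩, ?_⟩
    have : ((x - 2 * π * (t:ℝ) : ℝ) : AddCircle (2 * π)) = (x : AddCircle (2 * π)) - ((2 * π * (t:ℝ) : ℝ) : AddCircle (2*π)) := rfl
    rw [this, key, sub_zero]
  · rintro ⟨x, ⟨hx1, hx2⟩, rfl⟩
    refine ⟨x + 2 * π * t, ⟨by linarith, by linarith⟩, ?_⟩
    have : ((x + 2 * π * (t:ℝ) : ℝ) : AddCircle (2 * π)) = (x : AddCircle (2 * π)) + ((2 * π * (t:ℝ) : ℝ) : AddCircle (2*π)) := rfl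
    rw [this, key, add_zero]

lemma arcSet_full (a : ℝ) : arcSet a (2 * π) = Set.univ := by
  haveI : Fact (0 < 2 * π) := ⟨by positivity⟩
  simpa [arcSet] using AddCircle.coe_image_Ioc_eq (p := 2 * π) a

/-- **Proposition 2.5.** For `m ≥ 1` and `δ₀, …, δ_m ∈ (0,1)` with
`d({δᵢ}) = min_{i≠j} d(δᵢ - δⱼ) > 0` and `c = 2/d({δᵢ})`, every cube
`J = J₁ × ⋯ × J_m ⊆ 𝕋^m` (a product of arcs of equal length `0 < ℓ ≤ 2π`) is fitted by
some dyadic filtration `ℱ^i = (𝒟^{δᵢ})^m` with fit-constant `c^m`: there are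
`i`, `n ∈ ℕ` and `k₁, …, k_m < 2^n` with
`J ⊆ D_n^{δᵢ,k₁} × ⋯ × D_n^{δᵢ,k_m}` and `(2π/2^n)^m ≤ c^m · ℓ^m` (volumes). -/
theorem cube_fitted_by_some_family (m : ℕ) (hm : 1 ≤ m) (δ : Fin (m + 1) → ℝ)
    (hδ : ∀ i, δ i ∈ Set.Ioo (0 : ℝ) 1) (hd : 0 < dfam δ)
    (a : Fin m → ℝ) (ℓ : ℝ) (hℓ : 0 < ℓ) (hℓ' : ℓ ≤ 2 * π) :
    ∃ (i : Fin (m + 1)) (n : ℕ) (k : Fin m → ℕ), (∀ j, k j < 2 ^ n) ∧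
      (Set.univ.pi fun j => arcSet (a j) ℓ) ⊆
        (Set.univ.pi fun j =>
          arcSet (2 * π * δ i + 2 * π * k j / 2 ^ n) (2 * π / 2 ^ n)) ∧
      (2 * π / 2 ^ n) ^ m ≤ (2 / dfam δ) ^ m * ℓ ^ m := by
  classical
  have hπ : (0:ℝ) < 2 * π := by positivity
  set d := dfam δ with hdfd
  by_cases hcase : ℓ ≤ 2 * π * d
  swap
  · -- easy case: ℓ > 2πd, use n = 0, whole circle
    push_neg at hcase
    refine ⟨0, 0, fun _ => 0, fun j => by norm_num, ?_, ?_⟩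
    · intro x hx
      intro j _
      show x j ∈ arcSet (2 * π * δ 0 + 2 * π * ((0:ℕ):ℝ) / 2 ^ 0) (2 * π / 2 ^ 0)
      have : arcSet (2 * π * δ 0 + 2 * π * ((0:ℕ):ℝ) / 2 ^ 0) (2 * π / 2 ^ 0) = Set.univ := by
        rw [show (2 * π * δ 0 + 2 * π * ((0:ℕ):ℝ) / 2 ^ 0) = 2 * π * δ 0 by norm_num,
          show (2 * π / 2 ^ 0 : ℝ) = 2 * π by norm_num]
        exact arcSet_full _
      rw [this]; trivial
    · have h1 : 2 * π / 2 ^ 0 ≤ 2 / d * ℓ := by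
        rw [pow_zero, div_one, div_mul_eq_mul_div, le_div_iff₀ hd]
        nlinarith [hd, hℓ, hπ]
      calc (2 * π / 2 ^ 0) ^ m ≤ (2 / d * ℓ) ^ m :=
            pow_le_pow_left₀ (by positivity) h1 m
        _ = (2 / d) ^ m * ℓ ^ m := mul_pow _ _ _
  · -- main case
    set r : ℝ := 2 * π * d / ℓ with hrdef
    have hr1 : 1 ≤ r := (one_le_div hℓ).mpr hcase
    have hr0 : 0 ≤ r := by linarith
    set n : ℕ := Nat.log 2 ⌊r⌋₊ with hndef
    have hb1 : 1 ≤ ⌊r⌋₊ := Nat.le_floor (by exact_mod_cast hr1)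
    have h2n_le : (2:ℝ) ^ n ≤ r := by
      calc ((2:ℝ)) ^ n = ((2 ^ n : ℕ) : ℝ) := by push_cast; ring
        _ ≤ (⌊r⌋₊ : ℝ) := by exact_mod_cast Nat.pow_log_le_self 2 (by omega)
        _ ≤ r := Nat.floor_le hr0
    have h2n_gt : r < 2 ^ (n + 1) := by
      have h1 : ⌊r⌋₊ < 2 ^ (n + 1) := Nat.lt_pow_succ_log_self (by norm_num) _
      have h2 : r < (⌊r⌋₊ : ℝ) + 1 := Nat.lt_floor_add_one r
      have h3 : ((⌊r⌋₊ : ℝ)) + 1 ≤ ((2:ℝ)) ^ (n + 1) := by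
        have : ⌊r⌋₊ + 1 ≤ 2 ^ (n + 1) := h1
        exact_mod_cast this
      linarith
    have h2npos : (0:ℝ) < 2 ^ n := by positivity
    -- ℓ ≤ 2πd / 2^n
    have hkey1 : ℓ ≤ 2 * π * d / 2 ^ n := by
      rw [le_div_iff₀ h2npos]
      have := mul_le_mul_of_nonneg_left h2n_le (le_of_lt hℓ)
      rw [hrdef] at this
      calc ℓ * 2 ^ n = ℓ * (2:ℝ) ^ n := rfl
        _ ≤ ℓ * (2 * π * d / ℓ) := by nlinarith
        _ = 2 * π * d := by field_simp
    -- 2π/2^n ≤ 2ℓ/d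
    have hkey2 : 2 * π / 2 ^ n ≤ 2 / d * ℓ := by
      have h1 : 2 * π * d < ℓ * 2 ^ (n + 1) := by
        have := mul_lt_mul_of_pos_left h2n_gt hℓ
        rw [hrdef] at this
        calc 2 * π * d = ℓ * (2 * π * d / ℓ) := by field_simp
          _ < ℓ * 2 ^ (n+1) := this
      have h2 : (2:ℝ) ^ (n+1) = 2 * 2 ^ n := by ring
      rw [div_le_iff₀ h2npos, div_mul_eq_mul_div, div_mul_eq_mul_div, le_div_iff₀ hd]
      nlinarith [h1]
    -- bad sets
    set B : Fin m → Finset (Fin (m + 1)) := fun j =>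
      Finset.univ.filter (fun i => ∃ K : ℤ,
        2 * π * δ i + 2 * π * K / 2 ^ n ∈ Set.Ioo (a j) (a j + ℓ)) with hBdef
    have hBcard : ∀ j, (B j).card ≤ 1 := by
      intro j
      rw [Finset.card_le_one]
      intro i hi i' hi'
      by_contra hne
      simp only [hBdef, Finset.mem_filter] at hi hi'
      obtain ⟨K, hK1, hK2⟩ := hi.2
      obtain ⟨K', hK1', hK2'⟩ := hi'.2
      have hsep := grid_sep δ hne n K K'
      have habs : |(2 * π * δ i + 2 * π * K / 2 ^ n) - (2 * π * δ i' + 2 * π * K' / 2 ^ n)| < ℓ := by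
        rw [abs_sub_lt_iff]
        constructor <;> linarith
      have : 2 * π * d / 2 ^ n < ℓ := lt_of_le_of_lt hsep habs
      linarith
    -- pigeonhole
    set S : Finset (Fin (m + 1)) := Finset.univ.biUnion B with hSdef
    have hScard : S.card ≤ m := by
      calc S.card ≤ ∑ j : Fin m, (B j).card := Finset.card_biUnion_le
        _ ≤ ∑ _j : Fin m, 1 := Finset.sum_le_sum (fun j _ => hBcard j)
        _ = m := by simp
    have hSne : S ≠ Finset.univ := by
      intro h
      have : (Finset.univ : Finset (Fin (m+1))).card = m + 1 := by simp
      rw [h, this] at hScard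
      omega
    obtain ⟨i, hiS⟩ : ∃ i, i ∉ S := by
      by_contra h
      push_neg at h
      exact hSne (Finset.eq_univ_iff_forall.mpr h)
    have hgood : ∀ j : Fin m, ∀ K : ℤ,
        2 * π * δ i + 2 * π * K / 2 ^ n ∉ Set.Ioo (a j) (a j + ℓ) := by
      intro j K hK
      apply hiS
      rw [hSdef]
      exact Finset.mem_biUnion.mpr ⟨j, Finset.mem_univ j, by
        simp only [hBdef, Finset.mem_filter]
        exact ⟨Finset.mem_univ i, K, hK⟩⟩
    -- construct k
    set Kf : Fin m → ℤ := fun j => ⌊(a j - 2 * π * δ i) * 2 ^ n / (2 * π)⌋ with hKfdef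
    set k : Fin m → ℕ := fun j => ((Kf j) % (2 ^ n : ℤ)).toNat with hkdef
    have h2nZ : (0:ℤ) < 2 ^ n := by positivity
    have hklt : ∀ j, k j < 2 ^ n := by
      intro j
      have h1 : (Kf j) % (2 ^ n : ℤ) < 2 ^ n := Int.emod_lt_of_pos _ h2nZ
      have h2 : (0:ℤ) ≤ (Kf j) % (2 ^ n : ℤ) := Int.emod_nonneg _ (ne_of_gt h2nZ)
      have h3 : ((k j : ℤ)) = (Kf j) % (2 ^ n : ℤ) := Int.toNat_of_nonneg h2
      have h4 : ((k j : ℤ)) < (2:ℤ) ^ n := h3 ▸ h1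
      exact_mod_cast h4
    refine ⟨i, n, k, hklt, ?_, ?_⟩
    · apply Set.pi_mono
      intro j _
      -- per coordinate containment
      have hfloor1 : (Kf j : ℝ) ≤ (a j - 2 * π * δ i) * 2 ^ n / (2 * π) := Int.floor_le _
      have hfloor2 : (a j - 2 * π * δ i) * 2 ^ n / (2 * π) < (Kf j : ℝ) + 1 := Int.lt_floor_add_one _
      set g : ℝ := 2 * π * δ i + 2 * π * (Kf j) / 2 ^ n with hgdef
      have hg1 : g ≤ a j := by
        rw [le_div_iff₀ hπ] at hfloor1
        have hq : 2 * π * (Kf j : ℝ) / 2 ^ n ≤ a j - 2 * π * δ i := by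
          rw [div_le_iff₀ h2npos]
          nlinarith [hfloor1]
        rw [hgdef]
        linarith
      have hg2 : a j < g + 2 * π / 2 ^ n := by
        rw [div_lt_iff₀ hπ] at hfloor2
        have hq : a j - 2 * π * δ i < 2 * π * ((Kf j : ℝ) + 1) / 2 ^ n := by
          rw [lt_div_iff₀ h2npos]
          nlinarith [hfloor2]
        have h3 : 2 * π * ((Kf j : ℝ) + 1) / 2 ^ n = 2 * π * (Kf j : ℝ) / 2 ^ n + 2 * π / 2 ^ n := by
          ring
        rw [hgdef]
        linarith
      have hnext : 2 * π * δ i + 2 * π * ((Kf j + 1 : ℤ) : ℝ) / 2 ^ n ∉ Set.Ioo (a j) (a j + ℓ) :=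
        hgood j (Kf j + 1)
      have hgn : g + 2 * π / 2 ^ n = 2 * π * δ i + 2 * π * ((Kf j + 1 : ℤ) : ℝ) / 2 ^ n := by
        rw [hgdef]; push_cast; ring
      have hg3 : a j + ℓ ≤ g + 2 * π / 2 ^ n := by
        by_contra hcon
        push_neg at hcon
        exact hnext (hgn ▸ Set.mem_Ioo.mpr ⟨by linarith, by linarith⟩)
      -- arcSet (a j) ℓ ⊆ arcSet g (2π/2^n)
      have hsub1 : arcSet (a j) ℓ ⊆ arcSet g (2 * π / 2 ^ n) := arcSet_mono hg1 hg3
      -- rewrite via periodicity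
      have hmod : (Kf j) = 2 ^ n * (Kf j / (2 ^ n : ℤ)) + (k j : ℤ) := by
        rw [hkdef]
        simp only
        rw [Int.toNat_of_nonneg (Int.emod_nonneg _ (ne_of_gt h2nZ))]
        exact (Int.mul_ediv_add_emod (Kf j) (2 ^ n)).symm
      have hgeq : g = (2 * π * δ i + 2 * π * (k j : ℝ) / 2 ^ n) + 2 * π * ((Kf j / (2 ^ n : ℤ) : ℤ) : ℝ) := by
        rw [hgdef]
        have : ((Kf j : ℝ)) = 2 ^ n * ((Kf j / (2 ^ n : ℤ) : ℤ) : ℝ) + (k j : ℝ) := by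
          exact_mod_cast congrArg (fun z : ℤ => (z : ℝ)) hmod
        rw [this]
        field_simp
        ring
      have harc : arcSet g (2 * π / 2 ^ n)
          = arcSet (2 * π * δ i + 2 * π * (k j : ℝ) / 2 ^ n) (2 * π / 2 ^ n) := by
        rw [hgeq]
        exact arcSet_add_int_mul _ _ _
      rw [harc] at hsub1
      exact hsub1
    · calc (2 * π / 2 ^ n) ^ m ≤ (2 / d * ℓ) ^ m :=
          pow_le_pow_left₀ (by positivity) hkey2 m
        _ = (2 / d) ^ m * ℓ ^ m := mul_pow _ _ _
end
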